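/- Let T be a finite rooted tree. Then the simplicial set X^T of admissible subforests of T with layerings of cuts is a 2-Segal set: for every n ≥ 3 and every triangulation 𝒯 of a regular (n+1)-gon by its vertices, the induced map X^T_n → Hom(Δ[𝒯], X^T) is a bijection. -/

import Mathlib

/-! An `n`-simplex of `X^T` is determined by its layers `L k \ L (k + 1)`, and a family of layers
comes from a simplex exactly when no point of an earlier layer lies below a point of a later one.
Every edge `(a, b)` of `𝒯` that is not a side of the polygon is the long edge of a triangle
`(a, m, b)`, because a noncrossing family of chords of the `(n + 1)`-gon has at most `n - 1`
members. Restricting to that triangle recovers `L a \ L b`, `L m \ L b` and hence `L a \ L m`, so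
induction over the edges of `𝒯` recovers every `L k \ L b` with `a ≤ k ≤ b`; for the edge `(0, n)`
this is `L k` itself, which gives injectivity. Conversely, compatible data `g` on the edges yields
the layers `g (k, k + 1)` on the sides, and the same induction shows that they are ordered and that
their unions reproduce every `g (a, b)`, which gives surjectivity. -/


/-- A finite rooted tree, encoded as a finite partial order with a least element
(the root) in which the set of elements below any given vertex is totally
ordered.  Edges of the tree are the covering pairs of the order. -/
structure CutTree where
  V : Type
  [fintypeV : Fintype V]
  [decEq : DecidableEq V]
  [po : PartialOrder V]
  root : V
  root_le : ∀ v : V, root ≤ v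
  lower_total : ∀ v a b : V, a ≤ v → b ≤ v → a ≤ b ∨ b ≤ a

attribute [instance] CutTree.fintypeV CutTree.decEq CutTree.po

namespace CutTree

variable (T : CutTree)

/-- A subset of the vertices defines a lower subtree when it is downward closed. -/
def IsLower (L : Set T.V) : Prop := ∀ ⦃a b : T.V⦄, a ≤ b → b ∈ L → a ∈ L

/-- `L` defines a lower subforest of the admissible subforest with vertex set `H`. -/
def IsLowerIn (H L : Set T.V) : Prop :=
  L ⊆ H ∧ ∀ ⦃a b : T.V⦄, a ∈ H → b ∈ L → a ≤ b → a ∈ L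

/-- `H` is the vertex set of an admissible subforest: a difference of two nested
downward closed sets. -/
def IsAdmissible (H : Set T.V) : Prop :=
  ∃ A B : Set T.V, T.IsLower A ∧ T.IsLower B ∧ B ⊆ A ∧ H = A \ B

theorem isLower_empty : T.IsLower (∅ : Set T.V) := fun _ _ _ h => h.elim

theorem isAdmissible_empty : T.IsAdmissible (∅ : Set T.V) :=
  ⟨∅, ∅, T.isLower_empty, T.isLower_empty, le_rfl, by simp⟩

/-- An `n`-simplex of the 2-Segal set `X^T`: an admissible subforest `H = L 0`
together with a layering of cuts `H = L 0 ⊇ L 1 ⊇ ⋯ ⊇ L n = ∅` by lower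
subforests of `H`. -/
@[ext]
structure Simplex (T : CutTree) (n : ℕ) where
  L : Fin (n + 1) → Set T.V
  admissible : T.IsAdmissible (L 0)
  antitone : Antitone L
  lowerIn : ∀ i, T.IsLowerIn (L 0) (L i)
  last_eq : L (Fin.last n) = ∅

theorem isAdmissible_diff {H P Q : Set T.V} (hH : T.IsAdmissible H)
    (hP : T.IsLowerIn H P) (hQ : T.IsLowerIn H Q) (hQP : Q ⊆ P) :
    T.IsAdmissible (P \ Q) := by
  obtain ⟨A, B, hA, hB, hBA, rfl⟩ := hH
  have hlow : ∀ R : Set T.V, T.IsLowerIn (A \ B) R → T.IsLower (R ∪ B) := by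
    rintro R ⟨hRsub, hRcl⟩ a b hab hb
    rcases hb with hb | hb
    · have hbA : b ∈ A := (hRsub hb).1
      have haA : a ∈ A := hA hab hbA
      by_cases haB : a ∈ B
      · exact Or.inr haB
      · exact Or.inl (hRcl ⟨haA, haB⟩ hb hab)
    · exact Or.inr (hB hab hb)
  refine ⟨P ∪ B, Q ∪ B, hlow P hP, hlow Q hQ, Set.union_subset_union_left _ hQP, ?_⟩
  ext x
  constructor
  · rintro ⟨hxP, hxQ⟩
    have hxB : x ∉ B := (hP.1 hxP).2
    exact ⟨Or.inl hxP, by rintro (h | h) <;> [exact hxQ h; exact hxB h]⟩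
  · rintro ⟨hx1, hx2⟩
    rcases hx1 with hx1 | hx1
    · exact ⟨hx1, fun h => hx2 (Or.inl h)⟩
    · exact absurd (Or.inr hx1) hx2

/-- The action of a simplicial operator `α : [m] → [n]` on `X^T`. -/
def act {m n : ℕ} (α : Fin (m + 1) → Fin (n + 1)) (hα : Monotone α)
    (σ : T.Simplex n) : T.Simplex m where
  L j := σ.L (α j) \ σ.L (α (Fin.last m))
  admissible := by
    refine T.isAdmissible_diff σ.admissible (σ.lowerIn _) (σ.lowerIn _) ?_
    exact σ.antitone (hα (Fin.le_last _))
  antitone := by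
    intro j k hjk
    exact Set.diff_subset_diff_left (σ.antitone (hα hjk))
  lowerIn := by
    intro i
    constructor
    · exact Set.diff_subset_diff_left (σ.antitone (hα (Fin.zero_le _)))
    · rintro a b ⟨haL, haS⟩ ⟨hbL, _⟩ hab
      have ha0 : a ∈ σ.L 0 := (σ.lowerIn (α 0)).1 haL
      exact ⟨(σ.lowerIn (α i)).2 ha0 hbL hab, haS⟩
  last_eq := Set.diff_self

/-- The `i`-th face map `X^T_{n+1} → X^T_n`. -/
def face {n : ℕ} (i : Fin (n + 2)) : T.Simplex (n + 1) → T.Simplex n :=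
  T.act i.succAbove (Fin.strictMono_succAbove i).monotone

/-- The `i`-th degeneracy map `X^T_n → X^T_{n+1}`. -/
def degen {n : ℕ} (i : Fin (n + 1)) : T.Simplex n → T.Simplex (n + 1) :=
  T.act i.predAbove (Fin.predAbove_right_monotone i)

end CutTree

/-- A triangulation of a regular `(n+1)`-gon with vertices labelled cyclically
by `0, …, n`: a maximal collection of pairwise non-crossing diagonals. -/
structure Triangulation (n : ℕ) where
  diag : Finset (Fin (n + 1) × Fin (n + 1))
  mem_diag : ∀ p ∈ diag, p.1.val + 1 < p.2.val ∧ ¬(p.1.val = 0 ∧ p.2.val = n)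
  noncross : ∀ p ∈ diag, ∀ q ∈ diag,
    ¬(p.1.val < q.1.val ∧ q.1.val < p.2.val ∧ p.2.val < q.2.val)
  card_eq : diag.card = n - 2

namespace Triangulation

/-- The 1-simplices of `Δ[𝒯]`: sides of the polygon and diagonals of `𝒯`. -/
def IsEdge {n : ℕ} (𝒯 : Triangulation n) (a b : Fin (n + 1)) : Prop :=
  a < b ∧ (b.val = a.val + 1 ∨ (a.val = 0 ∧ b.val = n) ∨ (a, b) ∈ 𝒯.diag)

/-- The 2-simplices (triangles) of `Δ[𝒯]`. -/
def IsTri {n : ℕ} (𝒯 : Triangulation n) (a b c : Fin (n + 1)) : Prop :=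
  𝒯.IsEdge a b ∧ 𝒯.IsEdge b c ∧ 𝒯.IsEdge a c

end Triangulation

namespace CutTree

variable (T : CutTree)

/-- Restriction of an `n`-simplex of `X^T` along the edge from vertex `a` to
vertex `b` of `Δ[n]`. -/
def edgeAct {n : ℕ} (a b : Fin (n + 1)) (hab : a ≤ b) :
    T.Simplex n → T.Simplex 1 :=
  T.act (fun t => if t = 0 then a else b) (by
    intro x y hxy
    by_cases hx : x = 0
    · by_cases hy : y = 0
      · simp [hx, hy]
      · simpa [hx, hy] using hab
    · have hy : y ≠ 0 := fun h => hx (le_antisymm (h ▸ hxy) (Fin.zero_le _))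
      simp [hx, hy])

/-- Restriction of an `n`-simplex of `X^T` along the triangle with vertices
`a ≤ b ≤ c` of `Δ[n]`. -/
def triAct {n : ℕ} (a b c : Fin (n + 1)) (hab : a ≤ b) (hbc : b ≤ c) :
    T.Simplex n → T.Simplex 2 :=
  T.act (fun t => if t = 0 then a else if t = 1 then b else c) (by
    intro x y hxy
    by_cases hx0 : x = 0
    · by_cases hy0 : y = 0
      · simp [hx0, hy0]
      · by_cases hy1 : y = 1
        · simpa [hx0, hy0, hy1] using hab
        · simpa [hx0, hy0, hy1] using hab.trans hbc
    · by_cases hx1 : x = 1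
      · by_cases hy0 : y = 0
        · exact absurd (le_antisymm (hy0 ▸ hxy) (Fin.zero_le _)) hx0
        · by_cases hy1 : y = 1
          · simp [hx1, hy0, hy1]
          · simpa [hx1, hy0, hy1] using hbc
      · have h0 : x.val ≠ 0 := fun h => hx0 (Fin.ext h)
        have h1 : x.val ≠ 1 := fun h => hx1 (Fin.ext h)
        have hx2 : x = 2 := by
          apply Fin.ext
          show x.val = 2
          have := x.isLt
          omega
        have hy2 : y = 2 := by
          apply Fin.ext
          show y.val = 2
          have h2 := Fin.le_def.mp hxy
          have h3 : x.val = 2 := by rw [hx2]; rfl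
          have := y.isLt
          omega
        simp [hx2, hy2])

end CutTree

namespace Triangulation

variable {n : ℕ}

def Crosses (p q : Fin (n + 1) × Fin (n + 1)) : Prop :=
  p.1.val < q.1.val ∧ q.1.val < p.2.val ∧ p.2.val < q.2.val

def Noncrossing (F : Finset (Fin (n + 1) × Fin (n + 1))) : Prop :=
  ∀ p ∈ F, ∀ q ∈ F, ¬Crosses p q

theorem Noncrossing.insert {F : Finset (Fin (n + 1) × Fin (n + 1))}
    {p : Fin (n + 1) × Fin (n + 1)} (hF : Noncrossing F)
    (hp : ∀ q ∈ F, ¬Crosses p q ∧ ¬Crosses q p) :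
    Noncrossing (insert p F) := by
  intro q hq r hr
  rw [Finset.mem_insert] at hq hr
  rcases hq with rfl | hq <;> rcases hr with rfl | hr
  · exact fun h => lt_irrefl _ h.1
  · exact (hp r hr).1
  · exact (hp q hq).2
  · exact hF q hq r hr

/-- When `F` is a triangulation, this is the third vertex of the triangle below the chord `p`. -/
def apex (F : Finset (Fin (n + 1) × Fin (n + 1))) (p : Fin (n + 1) × Fin (n + 1)) : ℕ :=
  (F.filter fun q => q.1 = p.1 ∧ q.2 < p.2).sup (fun q => q.2.val) ⊔ (p.1.val + 1)

section apex

variable (F : Finset (Fin (n + 1) × Fin (n + 1)))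

theorem lt_apex (p : Fin (n + 1) × Fin (n + 1)) : p.1.val < apex F p :=
  Nat.lt_of_succ_le le_sup_right

theorem apex_lt {p : Fin (n + 1) × Fin (n + 1)} (hp : p.1.val + 1 < p.2.val) :
    apex F p < p.2.val := by
  refine max_lt ((Finset.sup_lt_iff (by rw [bot_eq_zero']; omega)).2 fun q hq => ?_) hp
  exact (Finset.mem_filter.1 hq).2.2

variable {F} {p : Fin (n + 1) × Fin (n + 1)}

theorem le_apex {q : Fin (n + 1) × Fin (n + 1)} (hq : q ∈ F) (h1 : q.1 = p.1) (h2 : q.2 < p.2) :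
    q.2.val ≤ apex F p :=
  le_sup_of_le_left (Finset.le_sup (f := fun q => q.2.val) (Finset.mem_filter.2 ⟨hq, h1, h2⟩))

theorem exists_eq_apex (hp : p.1.val + 1 < apex F p) :
    ∃ q ∈ F, q.1 = p.1 ∧ q.2.val = apex F p := by
  have hsup : apex F p = (F.filter fun q => q.1 = p.1 ∧ q.2 < p.2).sup (fun q => q.2.val) := by
    unfold apex at hp ⊢; omega
  have hne : (F.filter fun q => q.1 = p.1 ∧ q.2 < p.2).Nonempty := by
    by_contra h
    rw [Finset.not_nonempty_iff_eq_empty.1 h] at hsup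
    simp only [Finset.sup_empty, bot_eq_zero'] at hsup
    omega
  obtain ⟨q, hq, hqeq⟩ := Finset.exists_mem_eq_sup _ hne fun q => q.2.val
  exact ⟨q, (Finset.mem_filter.1 hq).1, (Finset.mem_filter.1 hq).2.1, by rw [hsup, hqeq]⟩

end apex

theorem Noncrossing.injOn_apex {F : Finset (Fin (n + 1) × Fin (n + 1))} (hF : Noncrossing F)
    (hlen : ∀ p ∈ F, p.1.val + 1 < p.2.val) : Set.InjOn (apex F) F := by
  -- if `p` starts strictly left of `p'`, the member of `F` realising `apex F p` would cross `p'`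
  have hleft : ∀ p ∈ F, ∀ p' ∈ F, p.1 < p'.1 → apex F p ≠ apex F p' := by
    intro p hp p' hp' hlt heq
    have := lt_apex F p'
    have := apex_lt F (hlen p' hp')
    obtain ⟨q, hq, hq1, hq2⟩ := exists_eq_apex (F := F) (p := p) (by omega)
    exact hF q hq p' hp' ⟨by omega, by omega, by omega⟩
  intro p hp p' hp' heq
  rcases lt_trichotomy p.1 p'.1 with hlt | h1 | hgt
  · exact absurd heq (hleft p hp p' hp' hlt)
  · have hle : ∀ p ∈ F, ∀ p' ∈ F, p.1 = p'.1 → apex F p = apex F p' →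
        p.2 ≤ p'.2 := by
      intro p hp p' hp' h1 heq
      by_contra! hlt
      have := le_apex hp' h1.symm hlt
      have := apex_lt F (hlen p' hp')
      omega
    exact Prod.ext h1 (le_antisymm (hle p hp p' hp' h1 heq) (hle p' hp' p hp h1.symm heq.symm))
  · exact absurd heq.symm (hleft p' hp' p hp hgt)

theorem Noncrossing.card_le {F : Finset (Fin (n + 1) × Fin (n + 1))} (hF : Noncrossing F)
    (hlen : ∀ p ∈ F, p.1.val + 1 < p.2.val) : F.card ≤ n - 1 := by
  calc F.card ≤ (Finset.Ioo 0 n).card := by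
        refine Finset.card_le_card_of_injOn (apex F) (fun p hp => ?_) (hF.injOn_apex hlen)
        have := lt_apex F p
        have := apex_lt F (hlen p hp)
        simp only [Finset.coe_Ioo, Set.mem_Ioo]
        omega
    _ = n - 1 := Nat.card_Ioo 0 n

variable (𝒯 : Triangulation n)

theorem isEdge_succ {k : ℕ} (hk : k < n) : 𝒯.IsEdge ⟨k, by omega⟩ ⟨k + 1, by omega⟩ :=
  ⟨Fin.mk_lt_mk.2 k.lt_succ_self, Or.inl rfl⟩

theorem isEdge_zero_last (hn : 0 < n) : 𝒯.IsEdge 0 (Fin.last n) :=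
  ⟨by rw [Fin.lt_def, Fin.val_zero, Fin.val_last]; exact hn, Or.inr (Or.inl ⟨rfl, rfl⟩)⟩

theorem not_crosses_zero_last (p : Fin (n + 1) × Fin (n + 1)) :
    ¬Crosses (0, Fin.last n) p ∧ ¬Crosses p (0, Fin.last n) := by
  simp only [Crosses, Fin.val_zero, Fin.val_last]
  omega

theorem not_crosses_of_isEdge {a b : Fin (n + 1)} (hab : 𝒯.IsEdge a b)
    {p : Fin (n + 1) × Fin (n + 1)} (hp : p ∈ 𝒯.diag) :
    ¬Crosses (a, b) p ∧ ¬Crosses p (a, b) := by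
  rcases hab.2 with hside | ⟨ha, hb⟩ | hdiag
  · simp only [Crosses]
    omega
  · obtain rfl : a = 0 := Fin.ext ha
    obtain rfl : b = Fin.last n := Fin.ext hb
    exact not_crosses_zero_last p
  · exact ⟨𝒯.noncross _ hdiag p hp, 𝒯.noncross p hp _ hdiag⟩

/-- The apex `m` is the leftmost vertex joined to `b` inside the edge. Were it not joined to `a`,
adding `(a, m)` and `(0, n)` to the diagonals would give a noncrossing family of `n` chords, one
more than `Noncrossing.card_le` allows. -/
theorem exists_isTri {a b : Fin (n + 1)} (hab : 𝒯.IsEdge a b) (hgap : a.val + 1 < b.val) :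
    ∃ m, 𝒯.IsTri a m b := by
  classical
  set S := Finset.univ.filter fun x => a < x ∧ 𝒯.IsEdge x b
  have hS : S.Nonempty := ⟨⟨b.val - 1, by omega⟩, Finset.mem_filter.2
    ⟨Finset.mem_univ _, by simp only [Fin.lt_def]; omega, Fin.mk_lt_mk.2 (by omega),
      Or.inl (by simp only; omega)⟩⟩
  obtain ⟨-, ham, hmb⟩ := Finset.mem_filter.1 (S.min'_mem hS)
  set m := S.min' hS
  have hmin : ∀ x, a < x → 𝒯.IsEdge x b → m ≤ x :=
    fun x h1 h2 => S.min'_le x (Finset.mem_filter.2 ⟨Finset.mem_univ _, h1, h2⟩)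
  refine ⟨m, ⟨ham, ?_⟩, hmb, hab⟩
  have hmb1 := hmb.1
  by_contra! hnot
  obtain ⟨hside, -, hdiag⟩ := hnot
  have hlast : ((0 : Fin (n + 1)), Fin.last n) ∉ 𝒯.diag :=
    fun h => (𝒯.mem_diag _ h).2 ⟨rfl, rfl⟩
  have hnew : (a, m) ∉ insert (0, Fin.last n) 𝒯.diag := by
    rw [Finset.mem_insert, not_or, Prod.ext_iff, Fin.ext_iff, Fin.ext_iff]
    exact ⟨fun h => by simp only [Fin.val_zero, Fin.val_last] at h; omega, hdiag⟩
  have hnc : Noncrossing (insert (a, m) (insert (0, Fin.last n) 𝒯.diag)) := by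
    refine (Noncrossing.insert 𝒯.noncross fun q _ => not_crosses_zero_last q).insert ?_
    simp only [Finset.forall_mem_insert]
    refine ⟨(not_crosses_zero_last (a, m)).symm,
      fun p hp => ⟨fun hcross => ?_, fun hcross => ?_⟩⟩
    · have hab' := (𝒯.not_crosses_of_isEdge hab hp).1
      have hmb' := (𝒯.not_crosses_of_isEdge hmb hp).2
      simp only [Crosses] at hcross hab' hmb'
      have hpb : p.2 = b := by omega
      have := hmin p.1 (by omega) ⟨by omega, Or.inr (Or.inr (hpb ▸ hp))⟩
      omega
    · have hab' := (𝒯.not_crosses_of_isEdge hab hp).2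
      simp only [Crosses] at hcross hab'
      omega
  have hcard := hnc.card_le (by
    simp only [Finset.forall_mem_insert, Fin.val_zero, Fin.val_last]
    exact ⟨by omega, by omega, fun p hp => (𝒯.mem_diag p hp).1⟩)
  rw [Finset.card_insert_of_notMem hnew, Finset.card_insert_of_notMem hlast, 𝒯.card_eq] at hcard
  omega

theorem edge_induction {P : ∀ a b : Fin (n + 1), 𝒯.IsEdge a b → Prop}
    (side : ∀ a b (h : 𝒯.IsEdge a b), b.val = a.val + 1 → P a b h)
    (tri : ∀ a m b (h : 𝒯.IsTri a m b), P a m h.1 → P m b h.2.1 → P a b h.2.2)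
    {a b : Fin (n + 1)} (h : 𝒯.IsEdge a b) : P a b h := by
  induction hd : b.val - a.val using Nat.strong_induction_on generalizing a b with
  | _ d ih =>
    by_cases hside : b.val = a.val + 1
    · exact side a b h hside
    · have hab := h.1
      obtain ⟨m, hm⟩ := 𝒯.exists_isTri h (by omega)
      have ham := hm.1.1
      have hmb := hm.2.1.1
      exact tri a m b hm (ih _ (by omega) hm.1 rfl) (ih _ (by omega) hm.2.1 rfl)

end Triangulation

namespace CutTree

variable {T : CutTree}

theorem Simplex.not_le_of_mem_diff {n : ℕ} (x : T.Simplex n) {i : Fin (n + 1)} {u v : T.V}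
    (hu : u ∈ x.L 0 \ x.L i) (hv : v ∈ x.L i) : ¬u ≤ v :=
  fun huv => hu.2 ((x.lowerIn i).2 hu.1 hv huv)

theorem Simplex.L_two (t : T.Simplex 2) : t.L 2 = ∅ := t.last_eq

theorem Simplex.ext_two {s t : T.Simplex 2} (h0 : s.L 0 = t.L 0) (h1 : s.L 1 = t.L 1) :
    s = t := by
  ext1
  funext j
  fin_cases j
  · exact h0
  · exact h1
  · exact s.L_two.trans t.L_two.symm

variable (T)

@[simp]
theorem triAct_L_zero {n : ℕ} (a b c : Fin (n + 1)) (hab : a ≤ b) (hbc : b ≤ c)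
    (x : T.Simplex n) :
    (T.triAct a b c hab hbc x).L 0 = x.L a \ x.L c := rfl

@[simp]
theorem triAct_L_one {n : ℕ} (a b c : Fin (n + 1)) (hab : a ≤ b) (hbc : b ≤ c)
    (x : T.Simplex n) :
    (T.triAct a b c hab hbc x).L 1 = x.L b \ x.L c := rfl

@[simp]
theorem edgeAct_L_zero {n : ℕ} (a b : Fin (n + 1)) (hab : a ≤ b) (x : T.Simplex n) :
    (T.edgeAct a b hab x).L 0 = x.L a \ x.L b := rfl

variable {T} {n : ℕ} (𝒯 : Triangulation n)

theorem diff_eq_of_triAct_eq {x y : T.Simplex n}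
    (hxy : ∀ a b c (h : 𝒯.IsTri a b c),
      T.triAct a b c h.1.1.le h.2.1.1.le x = T.triAct a b c h.1.1.le h.2.1.1.le y)
    {a b : Fin (n + 1)} (hab : 𝒯.IsEdge a b) (hdiff : x.L a \ x.L b = y.L a \ y.L b) :
    ∀ k, a ≤ k → k ≤ b → x.L k \ x.L b = y.L k \ y.L b := by
  refine 𝒯.edge_induction (P := fun a b _ => x.L a \ x.L b = y.L a \ y.L b →
    ∀ k, a ≤ k → k ≤ b → x.L k \ x.L b = y.L k \ y.L b) ?_ ?_ hab hdiff
  · intro a b _ hb hdiff k hak hkb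
    rcases (show k = a ∨ k = b by omega) with rfl | rfl
    · exact hdiff
    · simp only [sdiff_self]
  · intro a m b h ihl ihr _ k hak hkb
    have h0 := congrArg (·.L 0) (hxy a m b h)
    have h1 := congrArg (·.L 1) (hxy a m b h)
    simp only [triAct_L_zero, triAct_L_one] at h0 h1
    rcases le_total k m with hkm | hmk
    · have hleft : x.L a \ x.L m = y.L a \ y.L m := by
        rw [← sdiff_sdiff_sdiff_cancel_right (x.antitone h.2.1.1.le),
          ← sdiff_sdiff_sdiff_cancel_right (y.antitone h.2.1.1.le), h0, h1]
      rw [← Set.sdiff_union_sdiff_cancel (x.antitone hkm) (x.antitone h.2.1.1.le),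
        ← Set.sdiff_union_sdiff_cancel (y.antitone hkm) (y.antitone h.2.1.1.le),
        ihl hleft k hak hkm, h1]
    · exact ihr h1 k hmk hkb

theorem triAct_injective (hn : 2 ≤ n) :
    Function.Injective (fun (x : T.Simplex n) =>
      fun (a b c : Fin (n + 1)) (h : 𝒯.IsTri a b c) =>
        T.triAct a b c h.1.1.le h.2.1.1.le x) := by
  intro x y hxy
  have hxy' : ∀ a b c (h : 𝒯.IsTri a b c),
      T.triAct a b c h.1.1.le h.2.1.1.le x = T.triAct a b c h.1.1.le h.2.1.1.le y :=
    fun a b c h => congrFun (congrFun (congrFun (congrFun hxy a) b) c) h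
  have hE := 𝒯.isEdge_zero_last (by omega)
  obtain ⟨m, hm⟩ := 𝒯.exists_isTri hE (by simp only [Fin.val_zero, Fin.val_last]; omega)
  have h0 := congrArg (·.L 0) (hxy' 0 m (Fin.last n) hm)
  simp only [triAct_L_zero] at h0
  ext1
  funext k
  simpa only [x.last_eq, y.last_eq, Set.sdiff_empty] using
    diff_eq_of_triAct_eq 𝒯 hxy' hE h0 k (Fin.zero_le k) (Fin.le_last k)

end CutTree

section Layers

variable {α : Type*} [Preorder α]

def LayersOrdered (S : ℕ → Set α) (a b : ℕ) : Prop :=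
  ∀ j k, a ≤ j → j < k → k < b → ∀ u ∈ S j, ∀ v ∈ S k, ¬u ≤ v

theorem LayersOrdered.biUnion_Ico_diff {S : ℕ → Set α} {a b c : ℕ} (hS : LayersOrdered S a b)
    (hcb : c ≤ b) :
    (⋃ k ∈ Finset.Ico a b, S k) \ (⋃ k ∈ Finset.Ico c b, S k) =
      ⋃ k ∈ Finset.Ico a c, S k := by
  ext u
  simp only [Set.mem_sdiff, Set.mem_iUnion, Finset.mem_Ico, exists_prop, not_exists, not_and]
  constructor
  · rintro ⟨⟨k, ⟨hak, hkb⟩, hu⟩, hnot⟩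
    exact ⟨k, ⟨hak, by by_contra! hck; exact hnot k ⟨hck, hkb⟩ hu⟩, hu⟩
  · rintro ⟨j, ⟨haj, hjc⟩, hu⟩
    refine ⟨⟨j, ⟨haj, by omega⟩, hu⟩, fun k ⟨hck, hkb⟩ hu' => ?_⟩
    exact hS j k haj (by omega) hkb u hu u hu' le_rfl

end Layers

namespace CutTree

variable {T : CutTree} {n : ℕ}

def Simplex.ofLayers (S : ℕ → Set T.V) (hadm : T.IsAdmissible (⋃ k ∈ Finset.Ico 0 n, S k))
    (hS : LayersOrdered S 0 n) : T.Simplex n where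
  L v := ⋃ k ∈ Finset.Ico v.val n, S k
  admissible := hadm
  antitone _ _ hvw := Set.biUnion_subset_biUnion_left (Finset.Ico_subset_Ico_left hvw)
  lowerIn v := by
    refine ⟨Set.biUnion_subset_biUnion_left (Finset.Ico_subset_Ico_left (Nat.zero_le _)), ?_⟩
    intro u w hu hw huw
    simp only [Set.mem_iUnion, Finset.mem_Ico, exists_prop] at hu hw ⊢
    obtain ⟨j, ⟨-, hjn⟩, hu⟩ := hu
    obtain ⟨k, ⟨hvk, hkn⟩, hw⟩ := hw
    refine ⟨j, ⟨?_, hjn⟩, hu⟩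
    by_contra! hjv
    exact hS j k (Nat.zero_le _) (by omega) hkn u hu w hw huw
  last_eq := by simp

theorem Simplex.ofLayers_L_diff (S : ℕ → Set T.V)
    (hadm : T.IsAdmissible (⋃ k ∈ Finset.Ico 0 n, S k)) (hS : LayersOrdered S 0 n)
    (v w : Fin (n + 1)) :
    (ofLayers S hadm hS).L v \ (ofLayers S hadm hS).L w = ⋃ k ∈ Finset.Ico v.val w.val, S k :=
  LayersOrdered.biUnion_Ico_diff (fun j k _ => hS j k (Nat.zero_le _)) (by omega)

variable {𝒯 : Triangulation n}

def IsCompatible (g : ∀ a b : Fin (n + 1), 𝒯.IsEdge a b → T.Simplex 1)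
    (f : ∀ a b c : Fin (n + 1), 𝒯.IsTri a b c → T.Simplex 2) : Prop :=
  ∀ (a b c : Fin (n + 1)) (h : 𝒯.IsTri a b c),
    T.edgeAct (0 : Fin 3) 1 (by decide) (f a b c h) = g a b h.1 ∧
    T.edgeAct (1 : Fin 3) 2 (by decide) (f a b c h) = g b c h.2.1 ∧
    T.edgeAct (0 : Fin 3) 2 (by decide) (f a b c h) = g a c h.2.2

def sideLayer (g : ∀ a b : Fin (n + 1), 𝒯.IsEdge a b → T.Simplex 1) (k : ℕ) : Set T.V :=
  if hk : k < n then (g _ _ (𝒯.isEdge_succ hk)).L 0 else ∅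

namespace IsCompatible

variable {g : ∀ a b : Fin (n + 1), 𝒯.IsEdge a b → T.Simplex 1}
  {f : ∀ a b c : Fin (n + 1), 𝒯.IsTri a b c → T.Simplex 2}

theorem L_zero_ab (hc : IsCompatible g f) {a b c : Fin (n + 1)} (h : 𝒯.IsTri a b c) :
    (g a b h.1).L 0 = (f a b c h).L 0 \ (f a b c h).L 1 := by
  rw [← (hc a b c h).1, edgeAct_L_zero]

theorem L_zero_bc (hc : IsCompatible g f) {a b c : Fin (n + 1)} (h : 𝒯.IsTri a b c) :
    (g b c h.2.1).L 0 = (f a b c h).L 1 := by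
  rw [← (hc a b c h).2.1, edgeAct_L_zero, Simplex.L_two, Set.sdiff_empty]

theorem L_zero_ac (hc : IsCompatible g f) {a b c : Fin (n + 1)} (h : 𝒯.IsTri a b c) :
    (g a c h.2.2).L 0 = (f a b c h).L 0 := by
  rw [← (hc a b c h).2.2, edgeAct_L_zero, Simplex.L_two, Set.sdiff_empty]

theorem L_zero_eq_biUnion_sideLayer (hc : IsCompatible g f) {a b : Fin (n + 1)}
    (h : 𝒯.IsEdge a b) :
    (g a b h).L 0 = (⋃ k ∈ Finset.Ico a.val b.val, sideLayer g k) ∧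
      LayersOrdered (sideLayer g) a.val b.val := by
  refine 𝒯.edge_induction (P := fun a b h => (g a b h).L 0 = (⋃ k ∈ Finset.Ico a.val b.val,
    sideLayer g k) ∧ LayersOrdered (sideLayer g) a.val b.val) ?_ ?_ h
  · intro a b h hb
    obtain ⟨b, hbn⟩ := b
    subst hb
    dsimp only
    refine ⟨?_, fun j k _ _ _ => by omega⟩
    rw [Nat.Ico_succ_singleton, Finset.set_biUnion_singleton, sideLayer, dif_pos (by omega)]
  · intro a m b h ⟨hUl, hSl⟩ ⟨hUr, hSr⟩
    have ham := h.1.1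
    have hmb := h.2.1.1
    refine ⟨?_, fun j k haj hjk hkb u hu v hv => ?_⟩
    · rw [← Finset.Ico_union_Ico_eq_Ico (Fin.le_def.1 ham.le) (Fin.le_def.1 hmb.le),
        Finset.set_biUnion_union, ← hUl, ← hUr, hc.L_zero_ab h, hc.L_zero_bc h, hc.L_zero_ac h,
        Set.sdiff_union_of_subset ((f a m b h).antitone (by decide : (0 : Fin 3) ≤ 1))]
    rcases lt_or_ge k m with hkm | hmk
    · exact hSl j k haj hjk hkm u hu v hv
    rcases lt_or_ge j m with hjm | hmj
    · -- layers left of the apex lie in `f.L 0 \ f.L 1`, those right of it in the lower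
      -- subforest `f.L 1`
      have hu' : u ∈ (g a m h.1).L 0 :=
        hUl ▸ Set.mem_biUnion (Finset.mem_Ico.2 ⟨haj, hjm⟩) hu
      have hv' : v ∈ (g m b h.2.1).L 0 :=
        hUr ▸ Set.mem_biUnion (Finset.mem_Ico.2 ⟨hmk, hkb⟩) hv
      rw [hc.L_zero_ab h] at hu'
      rw [hc.L_zero_bc h] at hv'
      exact (f a m b h).not_le_of_mem_diff hu' hv'
    · exact hSr j k hmj hjk hkb u hu v hv

theorem exists_triAct_eq (hc : IsCompatible g f) (hn : 0 < n) :
    ∃ x : T.Simplex n, ∀ (a b c : Fin (n + 1)) (h : 𝒯.IsTri a b c),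
      T.triAct a b c h.1.1.le h.2.1.1.le x = f a b c h := by
  have hE := 𝒯.isEdge_zero_last hn
  obtain ⟨hU, hS⟩ := hc.L_zero_eq_biUnion_sideLayer hE
  simp only [Fin.val_zero, Fin.val_last] at hU hS
  refine ⟨Simplex.ofLayers (sideLayer g) (hU ▸ (g _ _ hE).admissible) hS,
    fun a b c h => Simplex.ext_two ?_ ?_⟩
  · rw [triAct_L_zero, Simplex.ofLayers_L_diff, ← (hc.L_zero_eq_biUnion_sideLayer h.2.2).1,
      hc.L_zero_ac h]
  · rw [triAct_L_one, Simplex.ofLayers_L_diff, ← (hc.L_zero_eq_biUnion_sideLayer h.2.1).1,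
      hc.L_zero_bc h]

end IsCompatible

end CutTree

theorem treeSimplicialSet_twoSegal (T : CutTree) (n : ℕ) (hn : 3 ≤ n)
    (𝒯 : Triangulation n) :
    Function.Injective (fun (x : T.Simplex n) =>
      fun (a b c : Fin (n + 1)) (h : 𝒯.IsTri a b c) =>
        T.triAct a b c h.1.1.le h.2.1.1.le x) ∧
    ∀ (g : ∀ a b : Fin (n + 1), 𝒯.IsEdge a b → T.Simplex 1)
      (f : ∀ a b c : Fin (n + 1), 𝒯.IsTri a b c → T.Simplex 2),
      (∀ (a b c : Fin (n + 1)) (h : 𝒯.IsTri a b c),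
        T.edgeAct (0 : Fin 3) 1 (by decide) (f a b c h) = g a b h.1 ∧
        T.edgeAct (1 : Fin 3) 2 (by decide) (f a b c h) = g b c h.2.1 ∧
        T.edgeAct (0 : Fin 3) 2 (by decide) (f a b c h) = g a c h.2.2) →
      ∃ x : T.Simplex n, ∀ (a b c : Fin (n + 1)) (h : 𝒯.IsTri a b c),
        T.triAct a b c h.1.1.le h.2.1.1.le x = f a b c h :=
  ⟨CutTree.triAct_injective 𝒯 (by omega),
    fun _ _ hc => CutTree.IsCompatible.exists_triAct_eq hc (by omega)⟩
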